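/- arXiv:2002.05710 — 5 statements merged into one kernel-verified Lean document; each statement's English description precedes it below -/
import Mathlib

section
/- Let T be a weighted tree, S a set of marked vertices, and C the compressed path tree of T with respect to S, where each edge of C is weighted by the maximum edge weight on the corresponding path in T. Then for every pair of marked vertices u, v in S, the maximum edge weight on the u-v path in C equals the maximum edge weight on the u-v path in T. -/
open SimpleGraph

variable {V : Type*}

/-- `e` is an edge lying on some path between two marked vertices of `S` in `T`. -/
def SPathEdge (T : SimpleGraph V) (S : Set V) (e : Sym2 V) : Prop :=
  ∃ a ∈ S, ∃ b ∈ S, ∃ p : T.Walk a b, p.IsPath ∧ e ∈ p.edges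

/-- `v` is a branching vertex of the union of all pairwise `S`-paths in `T`:
it has degree at least 3 in that union. -/
def Branching (T : SimpleGraph V) (S : Set V) (v : V) : Prop :=
  3 ≤ Set.ncard {x : V | SPathEdge T S s(v, x)}

/-- The vertices of the compressed path tree: the marked vertices together with the
branching vertices of the union of pairwise `S`-paths. -/
def cptVerts (T : SimpleGraph V) (S : Set V) : Set V :=
  S ∪ {v : V | Branching T S v}

/-- `C` is the compressed path tree of `T` with respect to the marked set `S`:
its vertices are `cptVerts T S`, and two of them are adjacent iff the path between
them in `T` contains no other vertex of `cptVerts T S`. -/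
def IsCPT (T : SimpleGraph V) (S : Set V) (C : SimpleGraph V) : Prop :=
  ∀ a b : V, C.Adj a b ↔
    a ∈ cptVerts T S ∧ b ∈ cptVerts T S ∧ a ≠ b ∧
      ∃ p : T.Walk a b, p.IsPath ∧
        ∀ x ∈ p.support, x ∈ cptVerts T S → x = a ∨ x = b

/-- `m` is the maximum edge weight on a (the) path from `u` to `v` in `T`. -/
def PathMaxW (T : SimpleGraph V) (w : Sym2 V → ℝ) (u v : V) (m : ℝ) : Prop :=
  ∃ p : T.Walk u v, p.IsPath ∧ (∃ e ∈ p.edges, w e = m) ∧ ∀ e ∈ p.edges, w e ≤ m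

/-! Every edge of `C` stands for a segment: the path of `T` between its ends, which meets
`cptVerts T S` only there. Two segments sharing an edge of `T` coincide: followed away from the
shared edge, both stay inside the union of the `S`-paths, and a vertex where they parted would be
branching. So expanding a path of `C` into its segments gives a walk of `T` with the same maximum
weight that crosses the heaviest edge of the heaviest segment exactly once; in a tree such an edge
lies on the path between the ends of the walk, and every edge of that path lies on the walk.
Conversely, cutting the `u`-`v` path of `T` at its vertices in `cptVerts T S` gives a path of `C`
with the same maximum weight. -/

namespace SimpleGraph

variable {G : SimpleGraph V}

namespace Walk

lemma exists_eq_append_cons_of_mem_edges {u v : V} {e : Sym2 V} :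
    ∀ {p : G.Walk u v}, e ∈ p.edges → ∃ (x y : V) (h : G.Adj x y) (p₁ : G.Walk u x)
      (p₂ : G.Walk y v), e = s(x, y) ∧ p = p₁.append (cons h p₂)
  | .cons h p, he => by
    rcases List.mem_cons.mp (edges_cons h p ▸ he) with rfl | he
    · exact ⟨_, _, h, nil, p, rfl, rfl⟩
    · obtain ⟨x, y, hxy, p₁, p₂, rfl, rfl⟩ := exists_eq_append_cons_of_mem_edges he
      exact ⟨x, y, hxy, cons h p₁, p₂, rfl, rfl⟩

lemma exists_eq_append_of_mem (s : Set V) {b : V} (hb : b ∈ s) :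
    ∀ {x : V} (p : G.Walk x b), ∃ c ∈ s, ∃ (p₁ : G.Walk x c) (p₂ : G.Walk c b),
      p = p₁.append p₂ ∧ ∀ z ∈ p₁.support, z ∈ s → z = c
  | _, .nil => ⟨b, hb, nil, nil, rfl, by simp⟩
  | x, .cons h p => by
    by_cases hx : x ∈ s
    · exact ⟨x, hx, nil, cons h p, rfl, by simp⟩
    · obtain ⟨c, hc, p₁, p₂, rfl, hp₁⟩ := exists_eq_append_of_mem s hb p
      refine ⟨c, hc, cons h p₁, p₂, rfl, ?_⟩
      intro z hz hzs
      rcases List.mem_cons.mp hz with rfl | hz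
      · exact absurd hzs hx
      · exact hp₁ z hz hzs

lemma reverse_append_cons {a x y b : V} (p₁ : G.Walk a x) (h : G.Adj x y) (p₂ : G.Walk y b) :
    (p₁.append (cons h p₂)).reverse = p₂.reverse.append (cons h.symm p₁.reverse) := by
  rw [reverse_append, reverse_cons, ← append_assoc, cons_append, nil_append]

end Walk

lemma IsAcyclic.eq_of_isPath (hG : G.IsAcyclic) {u v : V} {p q : G.Walk u v} (hp : p.IsPath)
    (hq : q.IsPath) : p = q :=
  congrArg Subtype.val ((hG.subsingleton_path u v).elim ⟨p, hp⟩ ⟨q, hq⟩)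

lemma IsAcyclic.edges_subset_of_isPath (hG : G.IsAcyclic) {u v : V} {p : G.Walk u v}
    (hp : p.IsPath) (W : G.Walk u v) : p.edges ⊆ W.edges := by
  classical
  exact hG.eq_of_isPath W.bypass_isPath hp ▸ W.edges_bypass_subset_edges

lemma IsAcyclic.mem_edges_of_count_eq_one [DecidableEq V] (hG : G.IsAcyclic) {u v : V}
    {e : Sym2 V} {W : G.Walk u v} (hW : W.edges.count e = 1) (p : G.Walk u v) :
    e ∈ p.edges := by
  have he : e ∈ W.edges := List.count_pos_iff.mp (by rw [hW]; exact Nat.one_pos)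
  obtain ⟨x, y, h, W₁, W₂, rfl, rfl⟩ := Walk.exists_eq_append_cons_of_mem_edges he
  rw [Walk.edges_append, Walk.edges_cons, List.count_append, List.count_cons_self] at hW
  have h₁ : s(x, y) ∉ W₁.edges := List.count_eq_zero.mp (by omega)
  have h₂ : s(x, y) ∉ W₂.edges := List.count_eq_zero.mp (by omega)
  by_contra hp
  have := isBridge_iff_forall_walk_mem_edges.mp (isAcyclic_iff_forall_adj_isBridge.mp hG h)
    ((W₁.reverse.append p).append W₂.reverse)
  simp [Walk.edges_append, Walk.edges_reverse, h₁, h₂, hp] at this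

end SimpleGraph

lemma pathMaxW_iff_maximum {G : SimpleGraph V} {w : Sym2 V → ℝ} {u v : V} {m : ℝ} :
    PathMaxW G w u v m ↔ ∃ p : G.Walk u v, p.IsPath ∧ (p.edges.map w).maximum = m := by
  simp only [PathMaxW, List.maximum_eq_coe_iff, List.mem_map, forall_exists_index, and_imp,
    forall_apply_eq_imp_iff₂]

open SimpleGraph Walk

variable {T : SimpleGraph V} {S : Set V}

lemma exists_isPath_mem_support_of_mem_cptVerts {a : V} (ha : a ∈ cptVerts T S) :
    ∃ s₁ ∈ S, ∃ s₂ ∈ S, ∃ r : T.Walk s₁ s₂, r.IsPath ∧ a ∈ r.support := by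
  rcases ha with ha | ha
  · exact ⟨a, ha, a, ha, nil, .nil, start_mem_support _⟩
  · have h₃ : 3 ≤ Set.ncard {x | SPathEdge T S s(a, x)} := ha
    have : {x | SPathEdge T S s(a, x)}.Nonempty := Set.nonempty_of_ncard_ne_zero (by omega)
    obtain ⟨x, s₁, hs₁, s₂, hs₂, r, hr, he⟩ := this
    exact ⟨s₁, hs₁, s₂, hs₂, r, hr, r.fst_mem_support_of_mem_edges he⟩

/-- The path of `T` between two vertices that lie on `S`-paths runs through the union of those
two `S`-paths and one more `S`-path joining them. -/
lemma spathEdge_of_mem_edges (hT : T.IsTree) {a b : V} (ha : a ∈ cptVerts T S)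
    (hb : b ∈ cptVerts T S) {p : T.Walk a b} (hp : p.IsPath) {e : Sym2 V} (he : e ∈ p.edges) :
    SPathEdge T S e := by
  classical
  obtain ⟨s₁, hs₁, s₂, hs₂, r, hr, har⟩ := exists_isPath_mem_support_of_mem_cptVerts ha
  obtain ⟨t₁, ht₁, t₂, ht₂, r', hr', hbr'⟩ := exists_isPath_mem_support_of_mem_cptVerts hb
  obtain ⟨W⟩ := hT.connected.preconnected s₁ t₁
  have := hT.isAcyclic.edges_subset_of_isPath hp
    (((r.takeUntil a har).reverse.append W.bypass).append (r'.takeUntil b hbr')) he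
  simp only [edges_append, edges_reverse, List.mem_append, List.mem_reverse] at this
  rcases this with (he | he) | he
  · exact ⟨s₁, hs₁, s₂, hs₂, r, hr, r.edges_takeUntil_subset_edges har he⟩
  · exact ⟨s₁, hs₁, t₁, ht₁, W.bypass, W.bypass_isPath, he⟩
  · exact ⟨t₁, ht₁, t₂, ht₂, r', hr', r'.edges_takeUntil_subset_edges hbr' he⟩

lemma branching_of_spathEdge [Finite V] {v x₁ x₂ x₃ : V} (h₁₂ : x₁ ≠ x₂) (h₁₃ : x₁ ≠ x₃)
    (h₂₃ : x₂ ≠ x₃) (h₁ : SPathEdge T S s(v, x₁)) (h₂ : SPathEdge T S s(v, x₂))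
    (h₃ : SPathEdge T S s(v, x₃)) : Branching T S v := by
  have hsub : ({x₁, x₂, x₃} : Set V) ⊆ {x | SPathEdge T S s(v, x)} := by
    rintro x (rfl | rfl | rfl) <;> assumption
  exact (Set.ncard_eq_three.mpr ⟨x₁, x₂, x₃, h₁₂, h₁₃, h₂₃, rfl⟩).symm.le.trans
    (Set.ncard_le_ncard hsub)

/-- Where `P` and `Q` part, the union of the `S`-paths branches, so they cannot part before
reaching `cptVerts T S`. -/
lemma eq_of_isPath_of_spathEdge [Finite V] {x y a c : V} (hxy : SPathEdge T S s(x, y))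
    (ha : a ∈ cptVerts T S) (hc : c ∈ cptVerts T S)
    {P : T.Walk x a} (hP : P.IsPath) (hyP : y ∉ P.support)
    (hPS : ∀ e ∈ P.edges, SPathEdge T S e) (hPa : ∀ z ∈ P.support, z ∈ cptVerts T S → z = a)
    {Q : T.Walk x c} (hQ : Q.IsPath) (hyQ : y ∉ Q.support)
    (hQS : ∀ e ∈ Q.edges, SPathEdge T S e) (hQc : ∀ z ∈ Q.support, z ∈ cptVerts T S → z = c) :
    a = c := by
  induction P generalizing y with
  | nil => exact hQc _ Q.start_mem_support ha
  | @cons x x₁ a h P ih =>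
    cases Q with
    | nil => exact (hPa _ (start_mem_support _) hc).symm
    | @cons _ x₂ _ h' Q =>
      rw [cons_isPath_iff] at hP hQ
      simp only [support_cons, List.mem_cons, not_or, edges_cons, forall_eq_or_imp]
        at hyP hyQ hPS hQS hPa hQc
      by_cases h₁₂ : x₁ = x₂
      · subst h₁₂
        exact ih (Sym2.eq_swap ▸ hPS.1) ha hP.1 hP.2 hPS.2 hPa.2 hQ.1 hQ.2 hQS.2 hQc.2
      · have hx : x ∈ cptVerts T S := Or.inr <| branching_of_spathEdge h₁₂
          (by rintro rfl; exact hyP.2 P.start_mem_support)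
          (by rintro rfl; exact hyQ.2 Q.start_mem_support)
          hPS.1 hQS.1 hxy
        exact (hPa.1 hx).symm.trans (hQc.1 hx)

/-- The paths of `T` that the edges of the compressed path tree stand for. -/
structure IsCPTSegment (T : SimpleGraph V) (S : Set V) {a b : V} (p : T.Walk a b) : Prop where
  isPath : p.IsPath
  start_mem : a ∈ cptVerts T S
  end_mem : b ∈ cptVerts T S
  eq_or_eq_of_mem : ∀ z ∈ p.support, z ∈ cptVerts T S → z = a ∨ z = b

namespace IsCPTSegment

variable {a b : V}

lemma reverse {p : T.Walk a b} (hp : IsCPTSegment T S p) : IsCPTSegment T S p.reverse where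
  isPath := hp.isPath.reverse
  start_mem := hp.end_mem
  end_mem := hp.start_mem
  eq_or_eq_of_mem z hz hzc := (hp.eq_or_eq_of_mem z (by simpa using hz) hzc).symm

lemma spathEdge (hT : T.IsTree) {p : T.Walk a b} (hp : IsCPTSegment T S p) {e : Sym2 V}
    (he : e ∈ p.edges) : SPathEdge T S e :=
  spathEdge_of_mem_edges hT hp.start_mem hp.end_mem hp.isPath he

lemma left_of_append_cons {x y : V} {p₁ : T.Walk a x} {h : T.Adj x y} {p₂ : T.Walk y b}
    (hp : IsCPTSegment T S (p₁.append (cons h p₂))) :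
    p₁.reverse.IsPath ∧ y ∉ p₁.reverse.support ∧
      ∀ z ∈ p₁.reverse.support, z ∈ cptVerts T S → z = a := by
  have hdisj : p₁.support.Disjoint p₂.support := by
    have := hp.isPath.support_nodup
    rw [support_append, support_cons, List.tail_cons] at this
    exact List.disjoint_of_nodup_append this
  simp only [support_reverse, List.mem_reverse]
  refine ⟨hp.isPath.of_append_left.reverse, fun hy => hdisj hy p₂.start_mem_support,
    fun z hz hzc => ?_⟩
  refine (hp.eq_or_eq_of_mem z (by simp [hz]) hzc).resolve_right ?_
  rintro rfl
  exact hdisj hz p₂.end_mem_support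

lemma eq_of_append_cons [Finite V] (hT : T.IsTree) {c d x y : V} {p₁ : T.Walk a x}
    {h : T.Adj x y} {p₂ : T.Walk y b} {q₁ : T.Walk c x} {h' : T.Adj x y} {q₂ : T.Walk y d}
    (hp : IsCPTSegment T S (p₁.append (cons h p₂)))
    (hq : IsCPTSegment T S (q₁.append (cons h' q₂))) : a = c := by
  obtain ⟨hp₁, hyp, hpa⟩ := hp.left_of_append_cons
  obtain ⟨hq₁, hyq, hqc⟩ := hq.left_of_append_cons
  exact eq_of_isPath_of_spathEdge (hp.spathEdge hT (by simp)) hp.start_mem hq.start_mem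
    hp₁ hyp (fun e he => hp.spathEdge hT (by simp_all)) hpa
    hq₁ hyq (fun e he => hq.spathEdge hT (by simp_all)) hqc

lemma sym2_eq_of_mem_edges [Finite V] (hT : T.IsTree) {c d : V} {p : T.Walk a b}
    {q : T.Walk c d} (hp : IsCPTSegment T S p) (hq : IsCPTSegment T S q) {e : Sym2 V}
    (hep : e ∈ p.edges) (heq : e ∈ q.edges) : s(a, b) = s(c, d) := by
  obtain ⟨x, y, h, p₁, p₂, rfl, rfl⟩ := exists_eq_append_cons_of_mem_edges hep
  obtain ⟨x', y', h', q₁, q₂, hxy, rfl⟩ := exists_eq_append_cons_of_mem_edges heq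
  have hp' := hp.reverse
  have hq' := hq.reverse
  rw [reverse_append_cons] at hp' hq'
  rcases Sym2.eq_iff.mp hxy with ⟨rfl, rfl⟩ | ⟨rfl, rfl⟩
  · rw [hp.eq_of_append_cons hT hq, hp'.eq_of_append_cons hT hq']
  · rw [hp.eq_of_append_cons hT hq', hp'.eq_of_append_cons hT hq, Sym2.eq_swap]

lemma count_edges_eq [DecidableEq V] [Finite V] (hT : T.IsTree) {a₀ b₀ c d : V}
    {p : T.Walk c d} (hp : IsCPTSegment T S p) {p₀ : T.Walk a₀ b₀} (hp₀ : IsCPTSegment T S p₀)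
    {e₀ : Sym2 V} (he₀ : e₀ ∈ p₀.edges) :
    p.edges.count e₀ = if s(c, d) = s(a₀, b₀) then 1 else 0 := by
  split_ifs with h
  · apply hp.isPath.isTrail.count_edges_eq_one
    rcases Sym2.eq_iff.mp h with ⟨rfl, rfl⟩ | ⟨rfl, rfl⟩
    · rwa [hT.isAcyclic.eq_of_isPath hp.isPath hp₀.isPath]
    · rwa [hT.isAcyclic.eq_of_isPath hp.isPath hp₀.isPath.reverse, edges_reverse,
        List.mem_reverse]
  · exact List.count_eq_zero.mpr fun he => h (hp.sym2_eq_of_mem_edges hT hp₀ he he₀)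

end IsCPTSegment

namespace IsCPT

variable {C : SimpleGraph V} {w wC : Sym2 V → ℝ} {a b : V}

lemma isCPTSegment (hT : T.IsAcyclic) (hC : IsCPT T S C) (h : C.Adj a b) {p : T.Walk a b}
    (hp : p.IsPath) : IsCPTSegment T S p := by
  obtain ⟨ha, hb, -, p', hp', hcpt⟩ := (hC a b).1 h
  exact ⟨hp, ha, hb, hT.eq_of_isPath hp' hp ▸ hcpt⟩

lemma adj_of_isCPTSegment (hC : IsCPT T S C) {p : T.Walk a b} (hp : IsCPTSegment T S p)
    (hab : a ≠ b) : C.Adj a b :=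
  (hC a b).2 ⟨hp.start_mem, hp.end_mem, hab, p, hp.isPath, hp.eq_or_eq_of_mem⟩

lemma exists_walk_maximum_eq_count_eq [DecidableEq V] [Finite V] (hT : T.IsTree)
    (hC : IsCPT T S C) (hwC : ∀ a b : V, C.Adj a b → PathMaxW T w a b (wC s(a, b)))
    {a₀ b₀ : V} {p₀ : T.Walk a₀ b₀} (hp₀ : IsCPTSegment T S p₀) {e₀ : Sym2 V}
    (he₀ : e₀ ∈ p₀.edges) (q : C.Walk a b) :
    ∃ W : T.Walk a b, (W.edges.map w).maximum = (q.edges.map wC).maximum ∧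
      W.edges.count e₀ = q.edges.count s(a₀, b₀) := by
  induction q with
  | nil => exact ⟨nil, rfl, rfl⟩
  | @cons c d _ h q ih =>
    obtain ⟨W, hWm, hWc⟩ := ih
    obtain ⟨p, hp, hpm⟩ := pathMaxW_iff_maximum.mp (hwC c d h)
    refine ⟨p.append W, ?_, ?_⟩
    · rw [edges_append, List.map_append, List.maximum_append, hpm, hWm, edges_cons,
        List.map_cons, List.maximum_cons]
    · rw [edges_append, List.count_append, hWc, edges_cons, List.count_cons,
        (hC.isCPTSegment hT.isAcyclic h hp).count_edges_eq hT hp₀ he₀]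
      simp [add_comm]

lemma exists_isPath_maximum_eq (hT : T.IsAcyclic) (hC : IsCPT T S C)
    (hwC : ∀ a b : V, C.Adj a b → PathMaxW T w a b (wC s(a, b))) {P : T.Walk a b}
    (hP : P.IsPath) (ha : a ∈ cptVerts T S) (hb : b ∈ cptVerts T S) :
    ∃ q : C.Walk a b, q.IsPath ∧ q.support ⊆ P.support ∧
      (q.edges.map wC).maximum = (P.edges.map w).maximum := by
  induction hn : P.length using Nat.strong_induction_on generalizing a P with
  | _ n ih =>
  cases P with
  | nil => exact ⟨nil, .nil, by simp, rfl⟩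
  | @cons _ a' _ h P =>
    obtain ⟨c, hc, P₁, P₂, rfl, hP₁⟩ := P.exists_eq_append_of_mem (cptVerts T S) hb
    have haP₂ : a ∉ P₂.support := fun haP =>
      ((cons_isPath_iff h _).mp hP).2 ((mem_support_append_iff _ _).mpr (.inr haP))
    rw [← cons_append] at hP
    have hseg : IsCPTSegment T S (cons h P₁) := by
      refine ⟨hP.of_append_left, ha, hc, fun z hz hzc => ?_⟩
      rcases List.mem_cons.mp hz with rfl | hz
      exacts [.inl rfl, .inr (hP₁ z hz hzc)]
    have hac : a ≠ c := fun hac => haP₂ (hac ▸ P₂.start_mem_support)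
    have hadj := hC.adj_of_isCPTSegment hseg hac
    obtain ⟨q, hq, hqP, hqm⟩ := ih P₂.length (by simp [← hn]) hP.of_append_right hc rfl
    obtain ⟨p, hp, hpm⟩ := pathMaxW_iff_maximum.mp (hwC a c hadj)
    rw [hT.eq_of_isPath hp hseg.isPath] at hpm
    refine ⟨cons hadj q, hq.cons fun haq => haP₂ (hqP haq), ?_, ?_⟩
    · intro z hz
      rcases List.mem_cons.mp hz with rfl | hz
      · exact start_mem_support _
      · exact List.mem_cons_of_mem _ ((mem_support_append_iff _ _).mpr (.inr (hqP hz)))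
    · rw [edges_cons, List.map_cons, List.maximum_cons, hqm, ← hpm, ← List.maximum_append,
        ← List.map_append, ← edges_append, cons_append]

end IsCPT

theorem cpt_preserves_path_max_general [Fintype V]
    (T : SimpleGraph V) (hT : T.IsTree) (w : Sym2 V → ℝ)
    (S : Set V) (C : SimpleGraph V) (hC : IsCPT T S C)
    (wC : Sym2 V → ℝ)
    (hwC : ∀ a b : V, C.Adj a b → PathMaxW T w a b (wC s(a, b)))
    (u v : V) (hu : u ∈ S) (hv : v ∈ S) (m : ℝ) :
    PathMaxW C wC u v m ↔ PathMaxW T w u v m := by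
  classical
  rw [pathMaxW_iff_maximum, pathMaxW_iff_maximum]
  constructor
  · rintro ⟨q, hq, hqm⟩
    obtain ⟨f, hf, rfl⟩ := List.mem_map.mp (List.maximum_eq_coe_iff.mp hqm).1
    induction f using Sym2.ind with | _ a b => ?_
    have hab := q.adj_of_mem_edges hf
    obtain ⟨p₀, hp₀, ⟨e₀, he₀, hwe₀⟩, -⟩ := hwC a b hab
    obtain ⟨W, hWm, hWc⟩ := hC.exists_walk_maximum_eq_count_eq hT hwC
      (hC.isCPTSegment hT.isAcyclic hab hp₀) he₀ q
    have he₀W : W.edges.count e₀ = 1 := hWc.trans (hq.isTrail.count_edges_eq_one hf)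
    refine ⟨W.bypass, W.bypass_isPath, le_antisymm ?_ ?_⟩
    · rw [← hqm, ← hWm]
      exact List.maximum_mono (List.map_subset _ W.edges_bypass_subset_edges)
    · rw [← hwe₀]
      exact List.le_maximum_of_mem'
        (List.mem_map_of_mem (hT.isAcyclic.mem_edges_of_count_eq_one he₀W _))
  · rintro ⟨P, hP, hPm⟩
    obtain ⟨q, hq, -, hqm⟩ :=
      hC.exists_isPath_maximum_eq hT.isAcyclic hwC hP (.inl hu) (.inl hv)
    exact ⟨q, hq, hqm.trans hPm⟩

/-- The compressed path tree preserves maximum edge weights between marked vertices: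
if every edge of `C` is weighted by the maximum edge weight of the corresponding path
in `T`, then for all marked `u ≠ v`, the maximum edge weight on the `u`-`v` path in `C`
equals the maximum edge weight on the `u`-`v` path in `T`. -/
theorem cpt_preserves_path_max [Fintype V]
    (T : SimpleGraph V) (hT : T.IsTree) (w : Sym2 V → ℝ)
    (S : Set V) (C : SimpleGraph V) (hC : IsCPT T S C)
    (wC : Sym2 V → ℝ)
    (hwC : ∀ a b : V, C.Adj a b → PathMaxW T w a b (wC s(a, b)))
    (u v : V) (hu : u ∈ S) (hv : v ∈ S) (huv : u ≠ v) (m : ℝ) :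
    PathMaxW C wC u v m ↔ PathMaxW T w u v m :=
  cpt_preserves_path_max_general T hT w S C hC wC hwC u v hu hv m
end

section
/- Let e₁, e₂, ..., e_m be a stream of edges on vertex set V, each edge e assigned weight -τ(e) where τ(e) is its arrival position, and let F be a minimum spanning forest of the graph of all edges seen so far. Then for any window threshold T_W, vertices u and v are connected in the subgraph of edges e with τ(e) ≥ T_W if and only if u and v are connected in F and the maximum-weight (i.e., oldest) edge e* on the path from u to v in F satisfies τ(e*) ≥ T_W. -/
/-!
Cycle property: if `ab` is an edge of `G`, every edge on the `F`-path from `a` to `b` weighs at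
most `w(ab)`, since otherwise trading that edge for `ab` would give a lighter spanning forest.
So every edge of `G` of weight at most `c` is bridged by edges of `F` of weight at most `c`, and
the sublevel graphs of `G` and of `F` have the same connected components. With `w = -τ` these
are the windows, and an `F`-path lies in the window exactly when its oldest edge does.
-/

open SimpleGraph

variable {V : Type*}

def IsSpanningForest (G F : SimpleGraph V) : Prop :=
  F ≤ G ∧ F.IsAcyclic ∧ ∀ u v : V, G.Reachable u v → F.Reachable u v

noncomputable def wSum [Fintype V] (w : Sym2 V → ℝ) (F : SimpleGraph V) : ℝ :=
  ∑ e ∈ (Set.toFinite F.edgeSet).toFinset, w e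

def IsMSF [Fintype V] (w : Sym2 V → ℝ) (G F : SimpleGraph V) : Prop :=
  IsSpanningForest G F ∧ ∀ F' : SimpleGraph V, IsSpanningForest G F' → wSum w F ≤ wSum w F'

theorem List.forall_le_of_forall_isMin_le {α β : Type*} [LinearOrder β] {l : List α}
    {f : α → β} {b : β} (h : ∀ a ∈ l, (∀ a' ∈ l, f a ≤ f a') → b ≤ f a) :
    ∀ a ∈ l, b ≤ f a := by
  classical
  intro a ha
  obtain ⟨a₀, ha₀, hmin⟩ := l.toFinset.exists_min_image f ⟨a, List.mem_toFinset.2 ha⟩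
  rw [List.mem_toFinset] at ha₀
  exact (h a₀ ha₀ fun a' ha' => hmin a' (List.mem_toFinset.2 ha')).trans
    (hmin a (List.mem_toFinset.2 ha))

namespace SimpleGraph

variable {G F : SimpleGraph V} {a b : V}

theorem Reachable.of_forall_adj_reachable {A B : SimpleGraph V}
    (h : ∀ x y, A.Adj x y → B.Reachable x y) {x y : V} (hr : A.Reachable x y) :
    B.Reachable x y := by
  obtain ⟨p⟩ := hr
  induction p with
  | nil => rfl
  | cons hxy _ ih => exact (h _ _ hxy).trans ih

theorem reachable_fromEdgeSet_iff {s : Set (Sym2 V)} (hs : s ⊆ F.edgeSet) :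
    (fromEdgeSet s).Reachable a b ↔ ∃ p : F.Walk a b, p.IsPath ∧ ∀ e ∈ p.edges, e ∈ s := by
  classical
  constructor
  · rintro ⟨q⟩
    have hle : fromEdgeSet s ≤ F := (fromEdgeSet_le _).2 fun e he => hs he.1
    refine ⟨q.toPath.1.mapLe hle, q.toPath.2.mapLe hle, fun e he => ?_⟩
    rw [Walk.edges_mapLe_eq_edges] at he
    exact (edgeSet_fromEdgeSet s ▸ q.toPath.1.edges_subset_edgeSet he).1
  · rintro ⟨p, -, hp⟩
    refine ⟨p.transfer _ fun e he => ?_⟩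
    rw [edgeSet_fromEdgeSet]
    exact ⟨hp e he, F.not_isDiag_of_mem_edgeSet (p.edges_subset_edgeSet he)⟩

theorem IsAcyclic.not_reachable_deleteEdges_of_mem_edges (hF : F.IsAcyclic) {p : F.Walk a b}
    (hp : p.IsPath) {f : Sym2 V} (hf : f ∈ p.edges) : ¬(F.deleteEdges {f}).Reachable a b := by
  classical
  rintro ⟨q⟩
  have hle := F.deleteEdges_le {f}
  have hpq :=
    (hF.subsingleton_path a b).elim ⟨p, hp⟩ ⟨q.toPath.1.mapLe hle, q.toPath.2.mapLe hle⟩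
  rw [Subtype.mk.injEq] at hpq
  rw [hpq, Walk.edges_mapLe_eq_edges] at hf
  have := q.toPath.1.edges_subset_edgeSet hf
  rw [edgeSet_deleteEdges] at this
  exact this.2 rfl

theorem IsSpanningForest.sup_edge_deleteEdges (hF : IsSpanningForest G F) (hab : G.Adj a b)
    (hab' : ¬F.Adj a b) {p : F.Walk a b} (hp : p.IsPath) {f : Sym2 V} (hf : f ∈ p.edges) :
    IsSpanningForest G ((F ⊔ edge a b).deleteEdges {f}) := by
  obtain ⟨hle, hac, hspan⟩ := hF
  have hba : (F ⊔ edge a b).Adj b a :=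
    Or.inr ((edge_adj _ _ _ _).2 ⟨Or.inr ⟨rfl, rfl⟩, hab.ne.symm⟩)
  -- `p` closed up by the new edge is a cycle through `f`, so deleting `f` keeps its ends connected.
  have hcycle : (Walk.cons hba (p.mapLe le_sup_left)).IsCycle := by
    rw [Walk.cons_isCycle_iff, Walk.edges_mapLe_eq_edges, Sym2.eq_swap]
    exact ⟨hp.mapLe _, fun h => hab' (p.edges_subset_edgeSet h)⟩
  have hreach_f : ∀ x y, s(x, y) = f → ((F ⊔ edge a b).deleteEdges {f}).Reachable x y := by
    rintro x y rfl
    refine (adj_and_reachable_delete_edges_iff_exists_cycle.2 ⟨b, _, hcycle, ?_⟩).2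
    rw [Walk.edges_cons, Walk.edges_mapLe_eq_edges]
    exact List.mem_cons_of_mem _ hf
  refine ⟨(deleteEdges_le _).trans (sup_le hle ((edge_le_iff _).2 (Or.inr hab))), ?_,
    fun x y hxy => (hspan x y hxy).of_forall_adj_reachable fun c d hcd => ?_⟩
  · have hsub : (F ⊔ edge a b).deleteEdges {f} ≤ F.deleteEdges {f} ⊔ edge a b :=
      fun x y ⟨hxy, hnf⟩ => hxy.imp (fun h => ⟨h, hnf⟩) id
    exact ((hac.anti (F.deleteEdges_le {f})).sup_edge_of_not_reachable
      (hac.not_reachable_deleteEdges_of_mem_edges hp hf)).anti hsub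
  · by_cases hcdf : s(c, d) = f
    · exact hreach_f c d hcdf
    · exact (deleteEdges_adj.2 ⟨Or.inl hcd, hcdf⟩).reachable

end SimpleGraph

theorem wSum_eq_of_edgeSet_eq [Fintype V] (w : Sym2 V → ℝ) {F F' : SimpleGraph V}
    {e f : Sym2 V} (h : F'.edgeSet = insert e F.edgeSet \ {f}) (he : e ∉ F.edgeSet)
    (hf : f ∈ F.edgeSet) : wSum w F' = wSum w F - w f + w e := by
  classical
  have hfinset : (Set.toFinite F'.edgeSet).toFinset =
      insert e ((Set.toFinite F.edgeSet).toFinset.erase f) := by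
    ext g
    have hef : e ≠ f := fun h => he (h ▸ hf)
    simp only [Set.Finite.mem_toFinset, h, Finset.mem_insert, Finset.mem_erase, Set.mem_sdiff,
      Set.mem_insert_iff, Set.mem_singleton_iff]
    grind
  rw [wSum, hfinset, Finset.sum_insert (by simp [he]), wSum,
    Finset.sum_erase_eq_sub (by simpa using hf)]
  ring

namespace IsMSF

variable [Fintype V] {w : Sym2 V → ℝ} {G F : SimpleGraph V} {a b : V}

theorem le_of_mem_edges (hF : IsMSF w G F) (hab : G.Adj a b) {p : F.Walk a b} (hp : p.IsPath)
    {f : Sym2 V} (hf : f ∈ p.edges) : w f ≤ w s(a, b) := by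
  obtain ⟨hsf, hmin⟩ := hF
  by_cases hab' : F.Adj a b
  · have hpq := (hsf.2.1.subsingleton_path a b).elim ⟨p, hp⟩ (Path.singleton hab')
    rw [Path.singleton, Subtype.mk.injEq] at hpq
    subst hpq
    rw [Walk.edges_cons, Walk.edges_nil, List.mem_singleton] at hf
    rw [hf]
  · have hedges : ((F ⊔ edge a b).deleteEdges {f}).edgeSet = insert s(a, b) F.edgeSet \ {f} := by
      rw [edgeSet_deleteEdges, edgeSet_sup, edgeSet_edge_of_ne hab.ne, Set.union_singleton]
    have hexchange := hmin _ (hsf.sup_edge_deleteEdges hab hab' hp hf)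
    rw [wSum_eq_of_edgeSet_eq w hedges hab' (p.edges_subset_edgeSet hf)] at hexchange
    linarith

theorem reachable_sublevel_iff (hF : IsMSF w G F) (c : ℝ) {u v : V} :
    (fromEdgeSet {e ∈ G.edgeSet | w e ≤ c}).Reachable u v ↔
      (fromEdgeSet {e ∈ F.edgeSet | w e ≤ c}).Reachable u v := by
  classical
  refine ⟨Reachable.of_forall_adj_reachable fun x y hxy => ?_,
    Reachable.mono (fromEdgeSet_mono fun e he => ⟨edgeSet_mono hF.1.1 he.1, he.2⟩)⟩
  obtain ⟨⟨hGxy, hxyc⟩, -⟩ := hxy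
  obtain ⟨p⟩ := hF.1.2.2 x y (Adj.reachable hGxy)
  exact (reachable_fromEdgeSet_iff fun e he => he.1).2 ⟨p.toPath.1, p.toPath.2,
    fun e he => ⟨p.toPath.1.edges_subset_edgeSet he,
      (hF.le_of_mem_edges hGxy p.toPath.2 he).trans hxyc⟩⟩

end IsMSF

theorem recent_edge_general [Fintype V]
    (G : SimpleGraph V) (τ : Sym2 V → ℕ)
    (F : SimpleGraph V) (hF : IsMSF (fun e => -(τ e : ℝ)) G F)
    (TW : ℕ) (u v : V) :
    (fromEdgeSet {e ∈ G.edgeSet | TW ≤ τ e}).Reachable u v ↔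
      ∃ p : F.Walk u v, p.IsPath ∧
        ∀ e ∈ p.edges,
          (∀ e' ∈ p.edges, -((τ e' : ℝ)) ≤ -((τ e : ℝ))) → TW ≤ τ e := by
  have hwindow : ∀ H : SimpleGraph V,
      {e ∈ H.edgeSet | TW ≤ τ e} = {e ∈ H.edgeSet | -(τ e : ℝ) ≤ -(TW : ℝ)} := by
    intro H
    ext e
    simp only [Set.mem_ofPred_eq, neg_le_neg_iff, Nat.cast_le]
  rw [hwindow G, hF.reachable_sublevel_iff, ← hwindow F,
    reachable_fromEdgeSet_iff fun e he => he.1]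
  refine exists_congr fun p => and_congr_right fun _ => ?_
  simp only [neg_le_neg_iff, Nat.cast_le]
  exact ⟨fun h e he _ => (h e he).2, fun h e he =>
    ⟨p.edges_subset_edgeSet he, List.forall_le_of_forall_isMin_le h e he⟩⟩

/-- The recent-edge lemma: edges arrive in a stream with distinct arrival positions
`τ`, each edge `e` has weight `-τ e`, and `F` is a minimum spanning forest of the graph
of all edges so far. Then `u` and `v` are connected by the edges of the window
(those with `τ e ≥ T_W`) iff they are connected in `F` and every maximum-weight
(i.e. oldest) edge on the `u`-`v` path in `F` has arrival position at least `T_W`. -/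
theorem recent_edge [Fintype V]
    (G : SimpleGraph V) (τ : Sym2 V → ℕ) (hτ : Set.InjOn τ G.edgeSet)
    (F : SimpleGraph V) (hF : IsMSF (fun e => -(τ e : ℝ)) G F)
    (TW : ℕ) (u v : V) :
    (fromEdgeSet {e ∈ G.edgeSet | TW ≤ τ e}).Reachable u v ↔
      ∃ p : F.Walk u v, p.IsPath ∧
        ∀ e ∈ p.edges,
          (∀ e' ∈ p.edges, -((τ e' : ℝ)) ≤ -((τ e : ℝ))) → TW ≤ τ e :=
  recent_edge_general G τ F hF TW u v
end

section
/- Let G be a weighted graph on n vertices with all edge weights in [1, W], fix ε > 0, and for each i ≥ 0 let G_i be the subgraph of G containing all edges of weight at most (1+ε)^i, with cc(G_i) denoting the number of connected components of G_i. Then the weight of the minimum spanning forest of G is at most (n - cc(G_0)) + Σ_{i≥1} (cc(G_{i-1}) - cc(G_i))(1+ε)^i, and this quantity is at most (1+ε) times the minimum spanning forest weight. -/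
open SimpleGraph

variable {V : Type*}

/-- The subgraph `G_i` of `G` consisting of all edges of weight at most `(1 + ε)^i`. -/
def levelGraph (G : SimpleGraph V) (w : Sym2 V → ℝ) (ε : ℝ) (i : ℕ) : SimpleGraph V :=
  fromEdgeSet {e ∈ G.edgeSet | w e ≤ (1 + ε) ^ i}

/-- Number of connected components, as a real number. -/
noncomputable def ccR (H : SimpleGraph V) : ℝ :=
  (Nat.card H.ConnectedComponent : ℝ)

/-!
In a minimum spanning forest `F`, every edge on the `F`-path joining the endpoints of an edge
`ab` of `G` is at most as heavy as `ab`: otherwise exchanging it for `ab` would give a lighter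
spanning forest. Hence, for every threshold `t`, the edges of `F` of weight `≤ t` form a spanning
forest of the subgraph `G_{≤ t}`, and as a forest with `m` edges on `n` vertices has `n - m`
components, `cc(G_i) = n - #{e ∈ F | w e ≤ (1 + ε)^i}`. Substituting this, the sum becomes
`∑_{e ∈ F} (1 + ε)^{k(e)}` with `k(e)` least such that `w e ≤ (1 + ε)^{k(e)}`, and
`w e ≤ (1 + ε)^{k(e)} ≤ (1 + ε) w e` because `w e ≥ 1`.
-/

namespace SimpleGraph

variable {G F K H : SimpleGraph V} {x y : V}

theorem reachable_le_of_adj_le (h : H.Adj ≤ K.Reachable) : H.Reachable ≤ K.Reachable := by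
  rw [reachable_eq_reflTransGen, reachable_eq_reflTransGen] at *
  exact Relation.reflTransGen_closed h

theorem sup_edge_adj_self (hxy : x ≠ y) : (K ⊔ edge x y).Adj x y :=
  Or.inr <| by simp [edge_adj, hxy]

theorem deleteEdges_sup_edge (h : H.Adj x y) : H.deleteEdges {s(x, y)} ⊔ edge x y = H := by
  ext u v
  simp only [sup_adj, deleteEdges_adj, adj_edge, Set.mem_singleton_iff]
  grind [Adj.ne, adj_congr_of_sym2]

theorem Reachable.cases_of_sup_edge {u v : V} (h : (K ⊔ edge x y).Reachable u v) :
    K.Reachable u v ∨ (K.Reachable u x ∧ K.Reachable y v) ∨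
      (K.Reachable u y ∧ K.Reachable x v) := by
  obtain ⟨p⟩ := h
  induction p with
  | nil => exact Or.inl .rfl
  | cons hadj _ ih =>
    rw [sup_adj, adj_edge, Sym2.eq_iff] at hadj
    rcases hadj with hadj | ⟨⟨rfl, rfl⟩ | ⟨rfl, rfl⟩, -⟩ <;>
      grind [Reachable.refl, Reachable.symm, Reachable.trans, Adj.reachable]

theorem card_connectedComponent_sup_edge [Finite V] (hxy : ¬K.Reachable x y) :
    Nat.card (K ⊔ edge x y).ConnectedComponent + 1 = Nat.card K.ConnectedComponent := by
  classical
  let f : K.ConnectedComponent → Option (K ⊔ edge x y).ConnectedComponent := fun c =>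
    if c = K.connectedComponentMk y then none else some (c.map (.ofLE le_sup_left))
  have hf : Function.Bijective f := by
    refine ⟨fun c d hcd => ?_, fun o => ?_⟩
    · induction c using ConnectedComponent.ind with | _ u =>
      induction d using ConnectedComponent.ind with | _ v =>
      simp only [f, ConnectedComponent.map_mk, Hom.coe_ofLE, id, ConnectedComponent.eq] at hcd ⊢
      split_ifs at hcd with hu hv hv
      · exact hu.trans hv.symm
      · rw [Option.some_inj, ConnectedComponent.eq] at hcd
        rcases hcd.cases_of_sup_edge with h | h | h
        · exact h
        · exact absurd h.2.symm hv
        · exact absurd h.1 hu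
    · rcases o with _ | c
      · exact ⟨K.connectedComponentMk y, if_pos rfl⟩
      induction c using ConnectedComponent.ind with | _ u =>
      by_cases hu : K.Reachable u y
      · refine ⟨K.connectedComponentMk x, ?_⟩
        simp only [f, ConnectedComponent.map_mk, Hom.coe_ofLE, id, ConnectedComponent.eq,
          if_neg hxy, Option.some_inj]
        exact (sup_edge_adj_self (K := K) fun h : x = y => hxy (h ▸ .rfl)).reachable.trans
          (hu.mono le_sup_left).symm
      · refine ⟨K.connectedComponentMk u, ?_⟩
        simp [f, ConnectedComponent.eq, hu]
  rw [← Finite.card_option, Nat.card_eq_of_bijective f hf]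

theorem card_connectedComponent_bot :
    Nat.card (⊥ : SimpleGraph V).ConnectedComponent = Nat.card V :=
  (Nat.card_eq_of_bijective _ ⟨fun _ _ h => reachable_bot.mp (ConnectedComponent.eq.mp h),
    fun c => c.ind fun v => ⟨v, rfl⟩⟩).symm

theorem ncard_edgeSet_sup_edge [Finite V] (hn : ¬K.Adj x y) (hxy : x ≠ y) :
    (K ⊔ edge x y).edgeSet.ncard = K.edgeSet.ncard + 1 := by
  rw [edgeSet_sup, edgeSet_edge_of_ne hxy, Set.union_singleton,
    Set.ncard_insert_of_notMem (by exact hn)]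

theorem IsAcyclic.ncard_edgeSet_add_card_connectedComponent [Finite V] (hH : H.IsAcyclic) :
    H.edgeSet.ncard + Nat.card H.ConnectedComponent = Nat.card V := by
  induction hn : H.edgeSet.ncard generalizing H with
  | zero =>
    rw [Set.ncard_eq_zero, edgeSet_eq_empty] at hn
    rw [hn, zero_add, card_connectedComponent_bot]
  | succ n ih =>
    obtain ⟨e, he⟩ := Set.nonempty_of_ncard_ne_zero (hn.trans_ne n.succ_ne_zero)
    induction e using Sym2.ind with | _ x y =>
    set K := H.deleteEdges {s(x, y)}
    have hK : ¬K.Reachable x y := isAcyclic_iff_forall_adj_isBridge.mp hH he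
    have hKH : K ⊔ edge x y = H := deleteEdges_sup_edge he
    rw [← hKH, ncard_edgeSet_sup_edge (fun h => hK h.reachable) he.ne] at hn
    rw [← ih (hH.anti (deleteEdges_le _)) (Nat.succ_injective hn),
      ← card_connectedComponent_sup_edge hK, hKH]
    omega

theorem card_connectedComponent_eq_of_le (hle : F ≤ G) (h : G.Reachable ≤ F.Reachable) :
    Nat.card F.ConnectedComponent = Nat.card G.ConnectedComponent := by
  refine Nat.card_eq_of_bijective _ ⟨fun c d hcd => ?_, ConnectedComponent.surjective_map_ofLE hle⟩
  induction c using ConnectedComponent.ind with | _ u =>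
  induction d using ConnectedComponent.ind with | _ v =>
  simp only [ConnectedComponent.map_mk, Hom.coe_ofLE, id, ConnectedComponent.eq] at hcd ⊢
  exact h _ _ hcd

def sublevelGraph (H : SimpleGraph V) (w : Sym2 V → ℝ) (t : ℝ) : SimpleGraph V :=
  fromEdgeSet {e ∈ H.edgeSet | w e ≤ t}

section sublevelGraph

variable {w : Sym2 V → ℝ} {t : ℝ}

theorem edgeSet_sublevelGraph : (H.sublevelGraph w t).edgeSet = {e ∈ H.edgeSet | w e ≤ t} := by
  rw [sublevelGraph, edgeSet_fromEdgeSet]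
  exact sdiff_eq_left.2 (Set.disjoint_left.2 fun _ he => H.not_isDiag_of_mem_edgeSet he.1)

theorem sublevelGraph_le : H.sublevelGraph w t ≤ H :=
  (fromEdgeSet_le H).2 fun _ he => he.1.1

theorem sublevelGraph_mono (h : H ≤ K) : H.sublevelGraph w t ≤ K.sublevelGraph w t :=
  fromEdgeSet_mono fun _ he => ⟨edgeSet_mono h he.1, he.2⟩

end sublevelGraph

end SimpleGraph

section MSF

variable {G F K : SimpleGraph V} {x y a b : V}

theorem wSum_sup_edge [Fintype V] (w : Sym2 V → ℝ) (hn : ¬K.Adj a b) (hab : a ≠ b) :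
    wSum w (K ⊔ edge a b) = wSum w K + w s(a, b) := by
  classical
  simp only [wSum, edgeSet_sup, edgeSet_edge_of_ne hab, Set.union_singleton,
    Set.Finite.toFinset_insert]
  rw [Finset.sum_insert (by simpa using hn), add_comm]

theorem IsSpanningForest.sup_edge_of_not_reachable (hF : IsSpanningForest G (K ⊔ edge x y))
    (hab : G.Adj a b) (hK : ¬K.Reachable a b) : IsSpanningForest G (K ⊔ edge a b) := by
  obtain ⟨hle, hac, hreach⟩ := hF
  refine ⟨sup_le (le_sup_left.trans hle) ((edge_le_iff _).2 (Or.inr hab)),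
    (hac.anti le_sup_left).sup_edge_of_not_reachable hK, fun u v huv => ?_⟩
  have hK' : K ≤ K ⊔ edge a b := le_sup_left
  have hab' := (sup_edge_adj_self (K := K) hab.ne).reachable
  have hxy : (K ⊔ edge a b).Reachable x y := by
    rcases (hreach a b hab.reachable).cases_of_sup_edge with h | h | h
    · exact absurd h hK
    · exact (h.1.mono hK').symm.trans (hab'.trans (h.2.mono hK').symm)
    · exact (h.2.mono hK').trans (hab'.symm.trans (h.1.mono hK'))
  rcases (hreach u v huv).cases_of_sup_edge with h | h | h
  · exact h.mono hK'
  · exact (h.1.mono hK').trans (hxy.trans (h.2.mono hK'))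
  · exact (h.1.mono hK').trans (hxy.symm.trans (h.2.mono hK'))

theorem IsMSF.exists_walk_weight_le [Fintype V] {w : Sym2 V → ℝ} (hF : IsMSF w G F)
    (hab : G.Adj a b) : ∃ p : F.Walk a b, ∀ e ∈ p.edges, w e ≤ w s(a, b) := by
  classical
  obtain ⟨p, hp⟩ := (hF.1.2.2 a b hab.reachable).exists_isPath
  refine ⟨p, fun f hf => ?_⟩
  by_contra! hlt
  induction f using Sym2.ind with | _ x y =>
  have hFxy : F.Adj x y := p.adj_of_mem_edges hf
  set K := F.deleteEdges {s(x, y)}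
  have hKab : ¬K.Reachable a b := by
    intro h
    obtain ⟨q, hq⟩ := reachable_deleteEdges_iff_exists_walk.mp h
    have hpq : p = q.bypass := congrArg Subtype.val <|
      (hF.1.2.1.subsingleton_path a b).elim ⟨p, hp⟩ ⟨q.bypass, q.bypass_isPath⟩
    exact hq (q.edges_bypass_subset_edges (hpq ▸ hf))
  have hKxy : ¬K.Reachable x y := isAcyclic_iff_forall_adj_isBridge.mp hF.1.2.1 hFxy
  have hFK : K ⊔ edge x y = F := deleteEdges_sup_edge hFxy
  have hmin := hF.2 _ ((hFK ▸ hF.1).sup_edge_of_not_reachable hab hKab)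
  rw [← hFK, wSum_sup_edge w (fun h => hKxy h.reachable) hFxy.ne,
    wSum_sup_edge w (fun h => hKab h.reachable) hab.ne] at hmin
  linarith

theorem IsMSF.isSpanningForest_sublevelGraph [Fintype V] {w : Sym2 V → ℝ} (hF : IsMSF w G F)
    (t : ℝ) : IsSpanningForest (G.sublevelGraph w t) (F.sublevelGraph w t) := by
  refine ⟨sublevelGraph_mono hF.1.1, hF.1.2.1.anti sublevelGraph_le, reachable_le_of_adj_le ?_⟩
  intro a b hab
  rw [sublevelGraph, fromEdgeSet_adj] at hab
  obtain ⟨p, hp⟩ := hF.exists_walk_weight_le hab.1.1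
  refine ⟨p.transfer _ fun e he => ?_⟩
  rw [edgeSet_sublevelGraph]
  exact ⟨p.edges_subset_edgeSet he, (hp e he).trans hab.1.2⟩

theorem IsMSF.ccR_sublevelGraph [Fintype V] {w : Sym2 V → ℝ} (hF : IsMSF w G F) (t : ℝ) :
    ccR (G.sublevelGraph w t) =
      Fintype.card V - ∑ e ∈ (Set.toFinite F.edgeSet).toFinset, if w e ≤ t then 1 else 0 := by
  have hsf := hF.isSpanningForest_sublevelGraph t
  have hcount := hsf.2.1.ncard_edgeSet_add_card_connectedComponent
  rw [card_connectedComponent_eq_of_le hsf.1 hsf.2.2, edgeSet_sublevelGraph,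
    Nat.card_eq_fintype_card (α := V)] at hcount
  have hfilter : ({e ∈ F.edgeSet | w e ≤ t} : Set (Sym2 V)) =
      ↑((Set.toFinite F.edgeSet).toFinset.filter (w · ≤ t)) := by
    ext; simp
  rw [hfilter, Set.ncard_coe_finset] at hcount
  rw [ccR, ← Finset.natCast_card_filter, ← hcount]
  push_cast
  ring

end MSF

theorem levelGraph_eq_sublevelGraph (G : SimpleGraph V) (w : Sym2 V → ℝ) (ε : ℝ) (i : ℕ) :
    levelGraph G w ε i = G.sublevelGraph w ((1 + ε) ^ i) := rfl

/-- For `1 ≤ x ≤ r ^ N` this is `r ^ k` with `k` least such that `x ≤ r ^ k`. -/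
noncomputable def roundUpPow (r : ℝ) (N : ℕ) (x : ℝ) : ℝ :=
  (if x ≤ r ^ 0 then 1 else 0) + ∑ i ∈ Finset.Icc 1 N,
    ((if x ≤ r ^ i then 1 else 0) - (if x ≤ r ^ (i - 1) then 1 else 0)) * r ^ i

section roundUpPow

variable {r x : ℝ} {N : ℕ}

theorem roundUpPow_succ : roundUpPow r (N + 1) x = roundUpPow r N x +
    ((if x ≤ r ^ (N + 1) then 1 else 0) - (if x ≤ r ^ N then 1 else 0)) * r ^ (N + 1) := by
  rw [roundUpPow, roundUpPow, Finset.sum_Icc_succ_top (by omega), Nat.add_sub_cancel, add_assoc]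

theorem roundUpPow_eq_zero (hr : 1 ≤ r) (hx : r ^ N < x) : roundUpPow r N x = 0 := by
  induction N with
  | zero => simpa [roundUpPow] using hx
  | succ n ih =>
    have hn : r ^ n < x := (pow_le_pow_right₀ hr n.le_succ).trans_lt hx
    rw [roundUpPow_succ, ih hn, if_neg hx.not_ge, if_neg hn.not_ge]
    ring

theorem roundUpPow_mem_Icc (hr : 1 ≤ r) (hx : 1 ≤ x) (hxN : x ≤ r ^ N) :
    roundUpPow r N x ∈ Set.Icc x (r * x) := by
  induction N with
  | zero =>
    obtain rfl : x = 1 := le_antisymm (by simpa using hxN) hx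
    simp [roundUpPow, hr]
  | succ n ih =>
    rw [roundUpPow_succ, if_pos hxN]
    by_cases hn : x ≤ r ^ n
    · rw [if_pos hn, sub_self, zero_mul, add_zero]
      exact ih hn
    · rw [not_le] at hn
      rw [roundUpPow_eq_zero hr hn, if_neg hn.not_ge, pow_succ] at *
      constructor <;> nlinarith

end roundUpPow

/-- Approximating the MSF weight from connected-component counts: for a graph with
edge weights in `[1, W]`, the MSF weight is at most
`(n - cc(G₀)) + ∑_{i ≥ 1} (cc(G_{i-1}) - cc(G_i)) (1+ε)^i`, which in turn is at most
`(1 + ε)` times the MSF weight. (The sum is truncated at any `N` with `W ≤ (1+ε)^N`,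
beyond which all terms vanish.) -/
theorem approx_msf_weight [Fintype V]
    (G : SimpleGraph V) (w : Sym2 V → ℝ) (W : ℝ)
    (hw : ∀ e ∈ G.edgeSet, 1 ≤ w e ∧ w e ≤ W)
    (ε : ℝ) (hε : 0 < ε) (N : ℕ) (hN : W ≤ (1 + ε) ^ N)
    (F : SimpleGraph V) (hF : IsMSF w G F) :
    wSum w F ≤
      ((Fintype.card V : ℝ) - ccR (levelGraph G w ε 0)) +
        ∑ i ∈ Finset.Icc 1 N,
          (ccR (levelGraph G w ε (i - 1)) - ccR (levelGraph G w ε i)) * (1 + ε) ^ i ∧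
    ((Fintype.card V : ℝ) - ccR (levelGraph G w ε 0)) +
        ∑ i ∈ Finset.Icc 1 N,
          (ccR (levelGraph G w ε (i - 1)) - ccR (levelGraph G w ε i)) * (1 + ε) ^ i ≤
      (1 + ε) * wSum w F := by
  set S := (Set.toFinite F.edgeSet).toFinset
  have hsum : ((Fintype.card V : ℝ) - ccR (levelGraph G w ε 0)) +
      ∑ i ∈ Finset.Icc 1 N,
        (ccR (levelGraph G w ε (i - 1)) - ccR (levelGraph G w ε i)) * (1 + ε) ^ i =
      ∑ e ∈ S, roundUpPow (1 + ε) N (w e) := by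
    simp only [levelGraph_eq_sublevelGraph, hF.ccR_sublevelGraph, roundUpPow,
      Finset.sum_add_distrib, sub_sub_sub_cancel_left, sub_sub_cancel, ← Finset.sum_sub_distrib,
      Finset.sum_mul]
    rw [Finset.sum_comm]
  have hround : ∀ e ∈ S, roundUpPow (1 + ε) N (w e) ∈ Set.Icc (w e) ((1 + ε) * w e) :=
    fun e he =>
      have hwe := hw e (edgeSet_mono hF.1.1 ((Set.toFinite _).mem_toFinset.1 he))
      roundUpPow_mem_Icc (by linarith) hwe.1 (hwe.2.trans hN)
  rw [hsum, wSum, Finset.mul_sum]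
  exact ⟨Finset.sum_le_sum fun e he => (hround e he).1,
    Finset.sum_le_sum fun e he => (hround e he).2⟩
end

section
/- Let G be a graph and F₁, F₂, ..., F_k a maximal spanning forest decomposition of order k, i.e., F_i is a maximal spanning forest of G \ (F₁ ∪ ... ∪ F_{i-1}). If vertices u and v are connected in F_i, then there exist at least i pairwise edge-disjoint u-v paths in G. -/
open SimpleGraph

variable {V : Type*}

/-- `F 0, F 1, ..., F (k-1)` is a maximal spanning forest decomposition of `G` of
order `k` (0-indexed): `F i` is a maximal spanning forest of `G` minus the edges of
`F 0, ..., F (i-1)`. -/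
def IsMSFDecomp (G : SimpleGraph V) (k : ℕ) (F : ℕ → SimpleGraph V) : Prop :=
  ∀ i < k, IsSpanningForest (G \ ⨆ j ∈ Finset.range i, F j) (F i)

/-- There exist `m` pairwise edge-disjoint paths from `u` to `v` in `G`. -/
def EdgeDisjointPaths (G : SimpleGraph V) (u v : V) (m : ℕ) : Prop :=
  ∃ P : Fin m → G.Walk u v, (∀ j, (P j).IsPath) ∧
    ∀ j₁ j₂ : Fin m, j₁ ≠ j₂ → ∀ e ∈ (P j₁).edges, e ∉ (P j₂).edges

/-!
Since `F i` avoids the edges of `F 0, …, F (j-1)` for every `j ≤ i`, a `u`-`v` path in `F i`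
shows that `u` and `v` are connected in `G \ (F 0 ∪ … ∪ F (j-1))`, whose maximal spanning
forest `F j` therefore connects them too. The forests are pairwise edge-disjoint, so one path
in each of `F 0, …, F i` gives `i + 1` edge-disjoint `u`-`v` paths in `G`.
-/

open Function

theorem edgeDisjointPaths_of_pairwise_disjoint {G : SimpleGraph V} {u v : V} {m : ℕ}
    (H : Fin m → SimpleGraph V) (hle : ∀ j, H j ≤ G) (hdisj : Pairwise (Disjoint on H))
    (hreach : ∀ j, (H j).Reachable u v) : EdgeDisjointPaths G u v m := by
  classical
  let p : ∀ j, (H j).Path u v := fun j => (hreach j).some.toPath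
  have hp : ∀ j, ∀ e ∈ ((p j).1.mapLe (hle j)).edges, e ∈ (H j).edgeSet := fun j e he =>
    (p j).1.edges_subset_edgeSet (Walk.edges_mapLe_eq_edges (hle j) (p j).1 ▸ he)
  refine ⟨fun j => (p j).1.mapLe (hle j), fun j => (p j).2.mapLe (hle j), ?_⟩
  intro j₁ j₂ hne e he₁ he₂
  exact Set.disjoint_left.mp (disjoint_edgeSet.mpr (hdisj hne)) (hp j₁ e he₁) (hp j₂ e he₂)

namespace IsMSFDecomp

variable {G : SimpleGraph V} {k : ℕ} {F : ℕ → SimpleGraph V}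

theorem le_sdiff (hF : IsMSFDecomp G k F) {i j : ℕ} (hi : i < k) (hji : j ≤ i) :
    F i ≤ G \ ⨆ l ∈ Finset.range j, F l := by
  refine (hF i hi).1.trans (sdiff_le_sdiff_left (biSup_mono fun l hl => ?_))
  simp only [Finset.mem_range] at hl ⊢
  omega

theorem le (hF : IsMSFDecomp G k F) {i : ℕ} (hi : i < k) : F i ≤ G :=
  (hF i hi).1.trans sdiff_le

theorem disjoint_of_lt (hF : IsMSFDecomp G k F) {a b : ℕ} (hab : a < b) (hb : b < k) :
    Disjoint (F a) (F b) := by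
  have ha : F a ≤ ⨆ l ∈ Finset.range b, F l :=
    le_iSup₂_of_le (f := fun l _ => F l) a (Finset.mem_range.mpr hab) le_rfl
  exact (disjoint_sdiff_self_left.mono (hF b hb).1 ha).symm

theorem disjoint (hF : IsMSFDecomp G k F) {a b : ℕ} (ha : a < k) (hb : b < k) (hab : a ≠ b) :
    Disjoint (F a) (F b) := by
  rcases hab.lt_or_gt with h | h
  · exact hF.disjoint_of_lt h hb
  · exact (hF.disjoint_of_lt h ha).symm

theorem reachable_of_le (hF : IsMSFDecomp G k F) {i j : ℕ} (hi : i < k) (hji : j ≤ i)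
    {u v : V} (h : (F i).Reachable u v) : (F j).Reachable u v :=
  (hF j (hji.trans_lt hi)).2.2 u v (h.mono (hF.le_sdiff hi hji))

end IsMSFDecomp

/-- In a maximal spanning forest decomposition, if `u` and `v` are connected in the
`(i+1)`-st forest `F i`, then there are at least `i + 1` pairwise edge-disjoint
`u`-`v` paths in `G`. -/
theorem msfd_connectivity (G : SimpleGraph V) (k : ℕ) (F : ℕ → SimpleGraph V)
    (hF : IsMSFDecomp G k F) :
    ∀ i < k, ∀ u v : V, (F i).Reachable u v → EdgeDisjointPaths G u v (i + 1) := by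
  intro i hi u v huv
  have hjk : ∀ j : Fin (i + 1), (j : ℕ) < k := fun j => by omega
  exact edgeDisjointPaths_of_pairwise_disjoint (fun j => F j) (fun j => hF.le (hjk j))
    (fun a b hab => hF.disjoint (hjk a) (hjk b) (Fin.val_ne_of_ne hab))
    (fun j => hF.reachable_of_le hi (by omega) huv)
end

section
/- For any finite undirected graph G on n vertices, Σ_{e ∈ E(G)} 1/s_e ≤ n - 1, where s_e denotes the strong connectivity of edge e (the maximum k such that e lies in a k-edge-connected subgraph of G). -/
open SimpleGraph

variable {V : Type*}

/-- A subgraph `H` of `G` is `k`-edge-connected: it has at least two vertices, and every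
cut of `H` (partition of its vertex set into two nonempty parts) has at least `k`
crossing edges. -/
def KEdgeConnSub (G : SimpleGraph V) (H : G.Subgraph) (k : ℕ) : Prop :=
  2 ≤ H.verts.ncard ∧
    ∀ A : Set V, A ⊆ H.verts → A.Nonempty → (H.verts \ A).Nonempty →
      k ≤ {e ∈ H.edgeSet | ∃ a ∈ A, ∃ b ∈ H.verts \ A, e = s(a, b)}.ncard

/-- The strength `s_e` of an edge `e` of `G`: the maximum `k` such that `e` lies in a
`k`-edge-connected subgraph of `G`. -/
noncomputable def strength (G : SimpleGraph V) (e : Sym2 V) : ℕ :=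
  sSup {k : ℕ | ∃ H : G.Subgraph, KEdgeConnSub G H k ∧ e ∈ H.edgeSet}

/-! For a vertex set `S` with `|S| ≥ 2`, take a minimum cut `(A, S \ A)` of the induced subgraph
`G[S]`, of size `k`. Then `G[S]` is `k`-edge-connected, so each of the `k` cut edges has strength
at least `k` and together they contribute at most `1`. By induction the edges inside `A` and inside
`S \ A` contribute at most `|A| - 1` and `|S \ A| - 1`, which sums to `|S| - 1`. -/

lemma finsum_mem_one_div_le_one {α : Type*} {s : Set α} (hs : s.Finite) {f : α → ℕ}
    (h : ∀ x ∈ s, s.ncard ≤ f x) : ∑ᶠ x ∈ s, 1 / (f x : ℝ) ≤ 1 := by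
  rw [finsum_mem_eq_finite_toFinset_sum _ hs]
  rw [Set.ncard_eq_toFinset_card s hs] at h
  calc ∑ x ∈ hs.toFinset, 1 / (f x : ℝ)
      ≤ ∑ _x ∈ hs.toFinset, 1 / (hs.toFinset.card : ℝ) := by
        refine Finset.sum_le_sum fun x hx => one_div_le_one_div_of_le ?_ ?_
        · exact_mod_cast Finset.card_pos.mpr ⟨x, hx⟩
        · exact_mod_cast h x (hs.mem_toFinset.mp hx)
    _ ≤ 1 := by
        rw [Finset.sum_const, nsmul_eq_mul, mul_one_div]
        exact div_self_le_one _

namespace SimpleGraph.Subgraph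

variable {G : SimpleGraph V}

def cutEdges (H : G.Subgraph) (A : Set V) : Set (Sym2 V) :=
  {e ∈ H.edgeSet | ∃ a ∈ A, ∃ b ∈ H.verts \ A, e = s(a, b)}

lemma edgeSet_induce_singleton (v : V) : ((⊤ : G.Subgraph).induce {v}).edgeSet = ∅ := by
  ext e
  induction e using Sym2.ind with
  | _ a b =>
    simp only [Subgraph.mem_edgeSet, Subgraph.induce_adj, Set.mem_singleton_iff, Subgraph.top_adj]
    grind [G.irrefl]

lemma disjoint_edgeSet_induce {s t : Set V} (h : Disjoint s t) :
    Disjoint ((⊤ : G.Subgraph).induce s).edgeSet ((⊤ : G.Subgraph).induce t).edgeSet := by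
  refine Set.disjoint_left.mpr fun e hs ht => ?_
  induction e using Sym2.ind with
  | _ a b => exact Set.disjoint_left.mp h hs.1 ht.1

lemma edgeSet_induce_eq_union_cutEdges {S A : Set V} (hA : A ⊆ S) :
    ((⊤ : G.Subgraph).induce S).edgeSet =
      (((⊤ : G.Subgraph).induce A).edgeSet ∪ ((⊤ : G.Subgraph).induce (S \ A)).edgeSet) ∪
        ((⊤ : G.Subgraph).induce S).cutEdges A := by
  ext e
  induction e using Sym2.ind with
  | _ a b =>
    simp only [cutEdges, Set.mem_union, Set.mem_ofPred_eq, Subgraph.mem_edgeSet,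
      Subgraph.induce_adj, Subgraph.top_adj, Subgraph.induce_verts, Set.mem_sdiff, Sym2.eq_iff]
    grind

lemma disjoint_edgeSet_induce_union_cutEdges {S A : Set V} :
    Disjoint (((⊤ : G.Subgraph).induce A).edgeSet ∪ ((⊤ : G.Subgraph).induce (S \ A)).edgeSet)
      (((⊤ : G.Subgraph).induce S).cutEdges A) := by
  refine Set.disjoint_left.mpr fun e hin ⟨_, a, ha, b, hb, he⟩ => ?_
  subst he
  rcases hin with hin | hin
  · exact hb.2 hin.2.1
  · exact hin.1.2 ha

lemma finsum_mem_edgeSet_induce_eq [Finite V] {M : Type*} [AddCommMonoid M] (f : Sym2 V → M)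
    {S A : Set V} (hA : A ⊆ S) :
    ∑ᶠ e ∈ ((⊤ : G.Subgraph).induce S).edgeSet, f e =
      ∑ᶠ e ∈ ((⊤ : G.Subgraph).induce A).edgeSet, f e +
        ∑ᶠ e ∈ ((⊤ : G.Subgraph).induce (S \ A)).edgeSet, f e +
          ∑ᶠ e ∈ ((⊤ : G.Subgraph).induce S).cutEdges A, f e := by
  rw [edgeSet_induce_eq_union_cutEdges hA,
    finsum_mem_union disjoint_edgeSet_induce_union_cutEdges (Set.toFinite _) (Set.toFinite _),
    finsum_mem_union (disjoint_edgeSet_induce Set.disjoint_sdiff_right) (Set.toFinite _)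
      (Set.toFinite _)]

end SimpleGraph.Subgraph

open SimpleGraph.Subgraph

section

variable {G : SimpleGraph V} [Finite V]

lemma KEdgeConnSub.le_ncard_edgeSet {H : G.Subgraph} {k : ℕ} (h : KEdgeConnSub G H k) :
    k ≤ G.edgeSet.ncard := by
  obtain ⟨a, ha, b, hb, hab⟩ := Set.one_lt_ncard_iff_nontrivial.mp h.1
  calc k ≤ (H.cutEdges {a}).ncard :=
        h.2 {a} (Set.singleton_subset_iff.mpr ha) (Set.singleton_nonempty a) ⟨b, hb, hab.symm⟩
    _ ≤ G.edgeSet.ncard := Set.ncard_le_ncard fun e he => H.edgeSet_subset he.1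

lemma KEdgeConnSub.le_strength {H : G.Subgraph} {k : ℕ} {e : Sym2 V} (h : KEdgeConnSub G H k)
    (he : e ∈ H.edgeSet) : k ≤ strength G e :=
  le_csSup ⟨G.edgeSet.ncard, fun _ ⟨_, hk, _⟩ => hk.le_ncard_edgeSet⟩ ⟨H, h, he⟩

lemma exists_kEdgeConnSub_induce_ncard_cutEdges {S : Set V} (hS : S.Nontrivial) :
    ∃ A ⊆ S, A.Nonempty ∧ (S \ A).Nonempty ∧
      KEdgeConnSub G ((⊤ : G.Subgraph).induce S)
        (((⊤ : G.Subgraph).induce S).cutEdges A).ncard := by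
  obtain ⟨a, ha, b, hb, hab⟩ := hS
  obtain ⟨A, ⟨hAS, hA, hSA⟩, hmin⟩ := Set.exists_min_image
    {A | A ⊆ S ∧ A.Nonempty ∧ (S \ A).Nonempty}
    (fun A => (((⊤ : G.Subgraph).induce S).cutEdges A).ncard) (Set.toFinite _)
    ⟨{a}, Set.singleton_subset_iff.mpr ha, Set.singleton_nonempty a, b, hb, hab.symm⟩
  exact ⟨A, hAS, hA, hSA, Set.one_lt_ncard_iff_nontrivial.mpr ⟨a, ha, b, hb, hab⟩,
    fun B hBS hB hSB => hmin B ⟨hBS, hB, hSB⟩⟩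

theorem finsum_one_div_strength_induce_le {S : Set V} (hS : S.Nonempty) :
    ∑ᶠ e ∈ ((⊤ : G.Subgraph).induce S).edgeSet, 1 / (strength G e : ℝ) ≤ S.ncard - 1 := by
  induction hn : S.ncard using Nat.strong_induction_on generalizing S with
  | _ n ih =>
  subst hn
  obtain ⟨v, rfl⟩ | hS := hS.exists_eq_singleton_or_nontrivial
  · simp [edgeSet_induce_singleton]
  obtain ⟨A, hAS, hA, hSA, hconn⟩ := exists_kEdgeConnSub_induce_ncard_cutEdges (G := G) hS
  have hAlt : A.ncard < S.ncard :=
    Set.ncard_lt_ncard ((Set.ssubset_iff_of_subset hAS).mpr hSA)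
  have hSAlt : (S \ A).ncard < S.ncard := Set.ncard_lt_ncard (hAS.sdiff_ssubset_of_nonempty hA)
  have hcut : ∑ᶠ e ∈ ((⊤ : G.Subgraph).induce S).cutEdges A, 1 / (strength G e : ℝ) ≤ 1 :=
    finsum_mem_one_div_le_one (Set.toFinite _) fun e he => hconn.le_strength he.1
  have hcard : ((S \ A).ncard : ℝ) + A.ncard = S.ncard := by
    exact_mod_cast Set.ncard_sdiff_add_ncard_of_subset hAS
  rw [finsum_mem_edgeSet_induce_eq _ hAS]
  linarith [ih _ hAlt hA rfl, ih _ hSAlt hSA rfl]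

end

/-- For any finite graph `G` on `n ≥ 1` vertices, `∑_{e ∈ E(G)} 1 / s_e ≤ n - 1`. -/
theorem sum_inv_strength_le [Fintype V] [Nonempty V] (G : SimpleGraph V) :
    ∑ e ∈ (Set.toFinite G.edgeSet).toFinset, (1 / (strength G e : ℝ)) ≤
      (Fintype.card V : ℝ) - 1 := by
  have h := finsum_one_div_strength_induce_le (G := G) Set.univ_nonempty
  have htop : (⊤ : G.Subgraph).induce Set.univ = ⊤ := Subgraph.induce_self_verts
  rwa [htop, Subgraph.edgeSet_top,
    finsum_mem_eq_finite_toFinset_sum _ (Set.toFinite _), Set.ncard_univ,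
    Nat.card_eq_fintype_card] at h
end
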